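/- Let α be a type of program states and let (c₁, u₁), …, (cₙ, uₙ) be a finite list of guard/update pairs with cᵢ : α → Prop decidable and uᵢ : α → α. Assume the guards are pairwise disjoint (for every state s and all i ≠ j, not both cᵢ s and cⱼ s hold) and every update preserves every guard (for all s, i, j: cⱼ (uᵢ s) ↔ cⱼ s). Then the sequential composition of the guarded updates gᵢ s = if cᵢ s then uᵢ s else s (executed in list order) equals the match-action semantics: for every state s, the composite result is uᵢ s if there exists (a necessarily unique) index i with cᵢ s, and is s if no guard holds. Consequently the sequence of guarded if-statements can be soundly rewritten into a single match-action table whose key selects among the disjoint guards and whose actions are the uᵢ. -/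

import Mathlib

/-!
Under disjointness a state satisfies at most one guard `cᵢ`, so every guarded update before
position `i` is skipped. Update `i` then fires, and since updates preserve all guards, the
state `uᵢ s` still satisfies no guard other than `cᵢ`; as the indices are distinct, every
later guarded update is skipped as well.
-/

/-- The guarded update `g s = if c s then u s else s`. -/
def guardedUpdate {α : Type*} (c : α → Prop) [DecidablePred c] (u : α → α) (s : α) : α :=
  if c s then u s else s

/-- Sequential composition, in list order, of the guarded updates
`gᵢ s = if cᵢ s then uᵢ s else s` for `i = 0, …, n-1`. -/
def runGuarded {α : Type*} {n : ℕ} (c : Fin n → α → Prop) [∀ i, DecidablePred (c i)]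
    (u : Fin n → α → α) (s : α) : α :=
  (List.finRange n).foldl (fun t i => guardedUpdate (c i) (u i) t) s

section

variable {α ι : Type*} (c : ι → α → Prop) [∀ i, DecidablePred (c i)] (u : ι → α → α)

theorem foldl_guardedUpdate_eq_self {L : List ι} {s : α} (h : ∀ i ∈ L, ¬ c i s) :
    L.foldl (fun t i => guardedUpdate (c i) (u i) t) s = s := by
  induction L with
  | nil => rfl
  | cons j L ih =>
    rw [List.foldl_cons, guardedUpdate, if_neg (h j List.mem_cons_self)]
    exact ih fun i hi => h i (List.mem_cons_of_mem j hi)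

theorem foldl_guardedUpdate_eq_of_mem
    (hdisj : ∀ s, ∀ i j, i ≠ j → ¬ (c i s ∧ c j s)) (hpres : ∀ s, ∀ i j, c j (u i s) ↔ c j s)
    {L : List ι} (hL : L.Nodup) {i : ι} (hi : i ∈ L) {s : α} (hs : c i s) :
    L.foldl (fun t i => guardedUpdate (c i) (u i) t) s = u i s := by
  have not_guard : ∀ k ≠ i, ¬ c k s := fun k hk hks => hdisj s k i hk ⟨hks, hs⟩
  obtain ⟨l₁, l₂, rfl⟩ := List.append_of_mem hi
  obtain ⟨hi_notMem, -⟩ := List.nodup_cons.mp (List.nodup_middle.mp hL)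
  have ne_of_mem : ∀ k ∈ l₁ ++ l₂, k ≠ i := fun k hk hki => hi_notMem (hki ▸ hk)
  have skip_before : ∀ k ∈ l₁, ¬ c k s := fun k hk =>
    not_guard k (ne_of_mem k (List.mem_append_left l₂ hk))
  have skip_after : ∀ k ∈ l₂, ¬ c k (u i s) := fun k hk =>
    (hpres s i k).not.mpr (not_guard k (ne_of_mem k (List.mem_append_right l₁ hk)))
  rw [List.foldl_append, foldl_guardedUpdate_eq_self c u skip_before, List.foldl_cons,
    guardedUpdate, if_pos hs, foldl_guardedUpdate_eq_self c u skip_after]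

end

/-- If the guards of a finite list of guard/update pairs are pairwise disjoint and
every update preserves every guard, then executing the guarded updates in sequence
equals the match-action semantics: at most one guard holds in any state, the
composite is `uᵢ s` when guard `cᵢ` holds, and the composite is `s` when no guard
holds.  Hence the sequence of guarded if-statements can be soundly rewritten into a
single match-action table selecting among the disjoint guards. -/
theorem guarded_sequence_eq_match_action {α : Type*} {n : ℕ}
    (c : Fin n → α → Prop) [∀ i, DecidablePred (c i)] (u : Fin n → α → α)
    (hdisj : ∀ s, ∀ i j : Fin n, i ≠ j → ¬ (c i s ∧ c j s))
    (hpres : ∀ s, ∀ i j : Fin n, c j (u i s) ↔ c j s) :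
    ∀ s : α,
      (∀ i j : Fin n, c i s → c j s → i = j) ∧
      (∀ i : Fin n, c i s → runGuarded c u s = u i s) ∧
      ((∀ i : Fin n, ¬ c i s) → runGuarded c u s = s) := fun s =>
  ⟨fun i j hi hj => by_contra fun hij => hdisj s i j hij ⟨hi, hj⟩,
    fun i hi => foldl_guardedUpdate_eq_of_mem c u hdisj hpres (List.nodup_finRange n)
      (List.mem_finRange i) hi,
    fun h => foldl_guardedUpdate_eq_self c u fun i _ => h i⟩
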